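/- arXiv:2406.08224 — 2 statements merged into one kernel-verified Lean document; each statement's English description precedes it below -/
import Mathlib

section
/- Let n₁ ≥ n₂ ≥ ⋯ ≥ n_c be positive integers with n = Σᵢ nᵢ + s and n₁ ≤ n − s − c + 1. Then λ₁(K_s ∨ (K_{n₁} ∪ ⋯ ∪ K_{n_c})) ≤ λ₁(K_s ∨ (K_{n−s−c+1} ∪ (c−1)K₁)), with equality if and only if (n₁,…,n_c) = (n−s−c+1, 1, …, 1). -/
/-!
The Perron vector of `K_s ∨ (K_{m₁} ∪ ⋯ ∪ K_{m_c})` can be chosen constant on `K_s` (value `a`)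
and on each clique (value `b j`). For `s > 0` it is positive and `b j` increases with the size of
the clique, because the eigenvalue equation on clique `j` reads `b j * (λ₁ + 1 - m j) = s * a`.
Placing the same values on `K_s ∨ (K_N ∪ (c-1)K₁)` and comparing Rayleigh quotients, the gain is
`∑ j, (m' j - m j) * f j` with `f j = s a b j + m' j (b j)²`. As the weights `m' j - m j` sum to
zero, this equals `∑ j, (m j - m' j) * (f z - f j)` for the big clique `z`: the term at `z`
vanishes, and for `j ≠ z` both factors are nonnegative, and positive for some `j` unless the two
partitions agree. For `s = 0` the graph is a disjoint union of cliques, with `λ₁ = max m - 1`.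
-/

open scoped Classical
open Matrix Polynomial

/-- The largest real eigenvalue (spectral radius for symmetric nonneg matrices). -/
noncomputable def lam1 {V : Type*} [Fintype V] (A : Matrix V V ℝ) : ℝ :=
  sSup {μ : ℝ | ∃ v : V → ℝ, v ≠ 0 ∧ A.mulVec v = μ • v}

/-- The adjacency matrix of a simple graph, over ℝ. -/
noncomputable def adjMat {V : Type*} [Fintype V] (G : SimpleGraph V) : Matrix V V ℝ :=
  Matrix.of fun i j => if G.Adj i j then 1 else 0

/-- The number of connected components of G − S. -/
noncomputable def numComp {V : Type*} (G : SimpleGraph V) (S : Set V) : ℕ :=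
  Nat.card ((G.induce Sᶜ).ConnectedComponent)

/-- `G` is `r`-tough. -/
def IsTough {V : Type*} [Fintype V] (r : ℝ) (G : SimpleGraph V) : Prop :=
  ∀ S : Finset V, 2 ≤ numComp G ↑S → r * (numComp G ↑S : ℝ) ≤ (S.card : ℝ)

/-- `K_s ∨ (K_a ∪ (n - s - a) K₁)` on `Fin n`. -/
def splitJoin (s a n : ℕ) : SimpleGraph (Fin n) where
  Adj i j := i ≠ j ∧ (i.val < s ∨ j.val < s ∨ (i.val < s + a ∧ j.val < s + a))
  symm := by constructor; rintro i j ⟨h1, h2⟩; exact ⟨h1.symm, by tauto⟩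
  loopless := by constructor; rintro i ⟨h, -⟩; exact h rfl

/-- `K_s ∨ (K_{m 0} ∪ ⋯ ∪ K_{m (c-1)})`. -/
def cliquesJoin (s c : ℕ) (m : Fin c → ℕ) :
    SimpleGraph (Fin s ⊕ (Σ i : Fin c, Fin (m i))) where
  Adj x y := x ≠ y ∧ (x.isLeft ∨ y.isLeft ∨
    ∃ (i : Fin c) (a b : Fin (m i)), x = Sum.inr ⟨i, a⟩ ∧ y = Sum.inr ⟨i, b⟩)
  symm := by constructor; rintro x y ⟨h1, h2⟩; refine ⟨h1.symm, ?_⟩; tauto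
  loopless := by constructor; rintro x ⟨h, -⟩; exact h rfl


namespace Matrix

variable {V : Type*} [Fintype V]

theorem dotProduct_mulVec_le_abs {A : Matrix V V ℝ} (hA : ∀ i j, 0 ≤ A i j) (v : V → ℝ) :
    v ⬝ᵥ A *ᵥ v ≤ |v| ⬝ᵥ A *ᵥ |v| := by
  simp only [dotProduct, mulVec, Finset.mul_sum, Pi.abs_apply]
  refine Finset.sum_le_sum fun i _ ↦ Finset.sum_le_sum fun j _ ↦ ?_
  calc v i * (A i j * v j) ≤ |v i * (A i j * v j)| := le_abs_self _
    _ = |v i| * (A i j * |v j|) := by rw [abs_mul, abs_mul, abs_of_nonneg (hA i j)]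

theorem abs_dotProduct_abs (v : V → ℝ) : |v| ⬝ᵥ |v| = v ⬝ᵥ v := by
  simp [dotProduct]

variable [DecidableEq V]

theorem mem_spectrum_iff_exists_mulVec_eq_smul {A : Matrix V V ℝ} {μ : ℝ} :
    μ ∈ spectrum ℝ A ↔ ∃ v, v ≠ 0 ∧ A *ᵥ v = μ • v := by
  rw [spectrum.mem_iff, isUnit_iff_isUnit_det, isUnit_iff_ne_zero, not_not,
    ← exists_mulVec_eq_zero_iff]
  simp [Algebra.algebraMap_eq_smul_one, sub_mulVec, smul_mulVec, sub_eq_zero, eq_comm]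

end Matrix

theorem lam1_eq_sSup_spectrum {V : Type*} [Fintype V] [DecidableEq V] (A : Matrix V V ℝ) :
    lam1 A = sSup (spectrum ℝ A) := by
  unfold lam1
  congr 1
  exact Set.ext fun _ ↦ mem_spectrum_iff_exists_mulVec_eq_smul.symm

namespace Matrix.IsHermitian

variable {V : Type*} [Fintype V] [DecidableEq V] {A : Matrix V V ℝ}

theorem le_lam1 (hA : A.IsHermitian) {μ : ℝ} (hμ : μ ∈ spectrum ℝ A) : μ ≤ lam1 A := by
  rw [lam1_eq_sSup_spectrum]
  exact le_csSup (hA.spectrum_real_eq_range_eigenvalues ▸ Set.finite_range _).bddAbove hμ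

theorem lam1_mem_spectrum [Nonempty V] (hA : A.IsHermitian) : lam1 A ∈ spectrum ℝ A := by
  rw [lam1_eq_sSup_spectrum, hA.spectrum_real_eq_range_eigenvalues]
  exact (Set.range_nonempty _).csSup_mem (Set.finite_range _)

theorem posSemidef_lam1_smul_one_sub (hA : A.IsHermitian) : (lam1 A • 1 - A).PosSemidef := by
  rw [posSemidef_iff_isHermitian_and_spectrum_nonneg]
  refine ⟨(isHermitian_one.smul (.all _)).sub hA, ?_⟩
  rw [← Algebra.algebraMap_eq_smul_one, ← spectrum.singleton_sub_eq]
  rintro _ ⟨_, rfl, μ, hμ, rfl⟩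
  exact sub_nonneg.2 (hA.le_lam1 hμ)

theorem dotProduct_mulVec_le_lam1_mul (hA : A.IsHermitian) (w : V → ℝ) :
    w ⬝ᵥ A *ᵥ w ≤ lam1 A * (w ⬝ᵥ w) := by
  simpa [sub_mulVec, smul_mulVec, dotProduct_sub, dotProduct_smul] using
    hA.posSemidef_lam1_smul_one_sub.dotProduct_mulVec_nonneg w

theorem lt_lam1_of_mul_lt (hA : A.IsHermitian) {μ : ℝ} {x : V → ℝ}
    (h : μ * (x ⬝ᵥ x) < x ⬝ᵥ A *ᵥ x) : μ < lam1 A :=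
  lt_of_mul_lt_mul_right (h.trans_le (hA.dotProduct_mulVec_le_lam1_mul x))
    (Finset.sum_nonneg fun i _ ↦ mul_self_nonneg (x i))

theorem exists_nonneg_mulVec_eq_lam1_smul [Nonempty V] (hA : A.IsHermitian)
    (hnn : ∀ i j, 0 ≤ A i j) : ∃ v, v ≠ 0 ∧ 0 ≤ v ∧ A *ᵥ v = lam1 A • v := by
  obtain ⟨v, hv0, hv⟩ := mem_spectrum_iff_exists_mulVec_eq_smul.1 hA.lam1_mem_spectrum
  have hM := hA.posSemidef_lam1_smul_one_sub
  have hquad : |v| ⬝ᵥ (lam1 A • 1 - A) *ᵥ |v| = 0 := by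
    refine le_antisymm ?_ (hM.dotProduct_mulVec_nonneg _)
    have := dotProduct_mulVec_le_abs hnn v
    simp only [sub_mulVec, smul_mulVec, one_mulVec, dotProduct_sub, dotProduct_smul,
      abs_dotProduct_abs, hv, smul_eq_mul] at this ⊢
    linarith
  refine ⟨|v|, by simpa using hv0, abs_nonneg v, ?_⟩
  have := (hM.dotProduct_mulVec_zero_iff |v|).1 (by simpa using hquad)
  rwa [sub_mulVec, smul_mulVec, one_mulVec, sub_eq_zero, eq_comm] at this

end Matrix.IsHermitian

theorem Fintype.sum_ite_eq_zero_eq_sub {α M : Type*} [Fintype α] [DecidableEq α] [AddCommGroup M]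
    (a : α) (f : α → M) : (∑ x, if a = x then 0 else f x) = ∑ x, f x - f a := by
  rw [Finset.sum_ite, Finset.sum_const_zero, zero_add, Finset.filter_not, Finset.filter_eq,
    if_pos (Finset.mem_univ a), ← Finset.erase_eq, Finset.sum_erase_eq_sub (Finset.mem_univ a)]

section AdjMat

variable {V : Type*} [Fintype V] (G : SimpleGraph V)

theorem adjMat_transpose : (adjMat G)ᵀ = adjMat G := by
  ext i j
  simp [adjMat, G.adj_comm]

theorem adjMat_isHermitian : (adjMat G).IsHermitian :=
  (conjTranspose_eq_transpose_of_trivial _).trans (adjMat_transpose G)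

theorem adjMat_nonneg (i j : V) : 0 ≤ adjMat G i j := by
  simp only [adjMat, of_apply]
  split_ifs <;> norm_num

theorem adjMat_mulVec_apply (x : V → ℝ) (u : V) :
    (adjMat G *ᵥ x) u = ∑ w, if G.Adj u w then x w else 0 := by
  simp [adjMat, mulVec, dotProduct]

end AdjMat

section CliquesJoin

variable {s c : ℕ} {m m' : Fin c → ℕ} {z : Fin c}

@[simp] theorem cliquesJoin_adj_inl_left {p : Fin s} {w : Fin s ⊕ (Σ i : Fin c, Fin (m i))} :
    (cliquesJoin s c m).Adj (.inl p) w ↔ .inl p ≠ w := by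
  simp [cliquesJoin]

@[simp] theorem cliquesJoin_adj_inr_inl {q : Σ i : Fin c, Fin (m i)} {p : Fin s} :
    (cliquesJoin s c m).Adj (.inr q) (.inl p) := by
  simp [cliquesJoin]

@[simp] theorem cliquesJoin_adj_inr_inr_same {k : Fin c} {t r : Fin (m k)} :
    (cliquesJoin s c m).Adj (.inr ⟨k, t⟩) (.inr ⟨k, r⟩) ↔ t ≠ r := by
  simp [cliquesJoin]

theorem cliquesJoin_not_adj_inr_inr {j k : Fin c} (h : k ≠ j) (t : Fin (m k)) (r : Fin (m j)) :
    ¬(cliquesJoin s c m).Adj (.inr ⟨k, t⟩) (.inr ⟨j, r⟩) := by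
  simp [cliquesJoin, h, h.symm]

variable (s m) in
def blockVec (a : ℝ) (b : Fin c → ℝ) : Fin s ⊕ (Σ i : Fin c, Fin (m i)) → ℝ :=
  Sum.elim (fun _ ↦ a) (fun q ↦ b q.1)

@[simp] theorem blockVec_inl (a : ℝ) (b : Fin c → ℝ) (p : Fin s) :
    blockVec s m a b (.inl p) = a := rfl

@[simp] theorem blockVec_inr (a : ℝ) (b : Fin c → ℝ) (q : Σ i : Fin c, Fin (m i)) :
    blockVec s m a b (.inr q) = b q.1 := rfl

theorem sum_blockVec (a : ℝ) (b : Fin c → ℝ) :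
    ∑ w, blockVec s m a b w = s * a + ∑ j, m j * b j := by
  simp [Fintype.sum_sum_type, Fintype.sum_sigma]

theorem blockVec_dotProduct (a : ℝ) (b : Fin c → ℝ) (v : Fin s ⊕ (Σ i : Fin c, Fin (m i)) → ℝ) :
    blockVec s m a b ⬝ᵥ v = a * ∑ p, v (.inl p) + ∑ j, b j * ∑ t, v (.inr ⟨j, t⟩) := by
  simp [dotProduct, Fintype.sum_sum_type, Fintype.sum_sigma, Finset.mul_sum]

theorem blockVec_dotProduct_blockVec (a a' : ℝ) (b b' : Fin c → ℝ) :
    blockVec s m a b ⬝ᵥ blockVec s m a' b' = s * (a * a') + ∑ j, m j * (b j * b' j) := by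
  simp only [blockVec_dotProduct, blockVec_inl, blockVec_inr, Finset.sum_const, Finset.card_univ,
    Fintype.card_fin, nsmul_eq_mul]
  congr 1
  · ring
  · exact Finset.sum_congr rfl fun j _ ↦ by ring

theorem adjMat_mulVec_blockVec (a : ℝ) (b : Fin c → ℝ) :
    adjMat (cliquesJoin s c m) *ᵥ blockVec s m a b =
      blockVec s m ((s - 1) * a + ∑ j, m j * b j) (fun k ↦ s * a + (m k - 1) * b k) := by
  ext (p | ⟨k, t⟩) <;> rw [adjMat_mulVec_apply]
  · simp only [cliquesJoin_adj_inl_left, ne_eq, ite_not, Fintype.sum_ite_eq_zero_eq_sub,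
      sum_blockVec, blockVec_inl]
    ring
  · rw [Fintype.sum_sum_type, Fintype.sum_sigma, Finset.sum_eq_single k]
    · simp [Fintype.sum_ite_eq_zero_eq_sub]
      ring
    · intro j _ hj
      simp [cliquesJoin_not_adj_inr_inr (Ne.symm hj)]
    · simp

theorem adjMat_mulVec_blockVec_eq_smul_iff {μ a : ℝ} {b : Fin c → ℝ} :
    adjMat (cliquesJoin s c m) *ᵥ blockVec s m a b = μ • blockVec s m a b ↔
      (0 < s → (s - 1) * a + ∑ j, m j * b j = μ * a) ∧
        ∀ k, 0 < m k → s * a + (m k - 1) * b k = μ * b k := by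
  rw [adjMat_mulVec_blockVec, funext_iff, Sum.forall, Sigma.forall]
  exact ⟨fun ⟨h0, hk⟩ ↦ ⟨fun hs ↦ h0 ⟨0, hs⟩, fun k hk' ↦ hk k ⟨0, hk'⟩⟩,
    fun ⟨h0, hk⟩ ↦ ⟨fun p ↦ h0 p.pos, fun k t ↦ hk k t.pos⟩⟩

/- The class sums `S`, `C j` of a nonnegative Perron vector `v` satisfy the transposed quotient
equations, by symmetry of the adjacency matrix; the class averages then solve the quotient
equations themselves. -/
theorem exists_blockVec_mulVec_eq_lam1_smul [Nonempty (Fin s ⊕ (Σ i : Fin c, Fin (m i)))] :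
    ∃ a b, 0 ≤ a ∧ 0 ≤ b ∧ blockVec s m a b ≠ 0 ∧
      adjMat (cliquesJoin s c m) *ᵥ blockVec s m a b =
        lam1 (adjMat (cliquesJoin s c m)) • blockVec s m a b := by
  obtain ⟨v, hv0, hvnn, hv⟩ :=
    (adjMat_isHermitian _).exists_nonneg_mulVec_eq_lam1_smul (adjMat_nonneg (cliquesJoin s c m))
  set S := ∑ p, v (.inl p)
  set C : Fin c → ℝ := fun j ↦ ∑ t, v (.inr ⟨j, t⟩)
  have key (a' : ℝ) (b' : Fin c → ℝ) :
      (adjMat (cliquesJoin s c m) *ᵥ blockVec s m a' b') ⬝ᵥ v =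
        lam1 (adjMat (cliquesJoin s c m)) * (blockVec s m a' b' ⬝ᵥ v) := by
    rw [← vecMul_transpose, ← dotProduct_mulVec, adjMat_transpose, hv, dotProduct_smul,
      smul_eq_mul]
  have hS : (s - 1) * S + s * ∑ j, C j = lam1 (adjMat (cliquesJoin s c m)) * S := by
    simpa [adjMat_mulVec_blockVec, blockVec_dotProduct, ← Finset.mul_sum] using key 1 0
  have hC (k : Fin c) : m k * S + (m k - 1) * C k = lam1 (adjMat (cliquesJoin s c m)) * C k := by
    simpa [adjMat_mulVec_blockVec, blockVec_dotProduct, Pi.single_apply] using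
      key 0 (Pi.single k 1)
  have hsa : (s : ℝ) * (S / s) = S := mul_div_cancel_of_imp' fun h ↦ by
    obtain rfl : s = 0 := by exact_mod_cast h
    simp [S]
  have hmb (j : Fin c) : (m j : ℝ) * (C j / m j) = C j := mul_div_cancel_of_imp' fun h ↦ by
    have : IsEmpty (Fin (m j)) := by rw [show m j = 0 by exact_mod_cast h]; infer_instance
    simp [C]
  refine ⟨S / s, fun j ↦ C j / m j, div_nonneg (Finset.sum_nonneg fun _ _ ↦ hvnn _) s.cast_nonneg,
    fun j ↦ div_nonneg (Finset.sum_nonneg fun _ _ ↦ hvnn _) (m j).cast_nonneg, fun h ↦ ?_,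
    adjMat_mulVec_blockVec_eq_smul_iff.2 ⟨fun hs ↦ ?_, fun k hk ↦ ?_⟩⟩
  · have hpos : 0 < ∑ w, v w := Fintype.sum_pos (lt_of_le_of_ne hvnn (Ne.symm hv0))
    have := congrArg (fun w ↦ ∑ x, w x) h
    simp only [sum_blockVec, hsa, hmb, Pi.zero_apply, Finset.sum_const_zero] at this
    rw [Fintype.sum_sum_type, Fintype.sum_sigma] at hpos
    linarith
  · have : (s : ℝ) ≠ 0 := Nat.cast_ne_zero.2 hs.ne'
    simp only [hmb]
    field_simp
    linear_combination hS
  · have : (m k : ℝ) ≠ 0 := Nat.cast_ne_zero.2 hk.ne'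
    rw [hsa]
    field_simp
    linear_combination hC k

theorem dotProduct_mulVec_blockVec_sub_eq (hm : ∀ j, 0 < m j) {μ a : ℝ} {b : Fin c → ℝ}
    (heig : adjMat (cliquesJoin s c m) *ᵥ blockVec s m a b = μ • blockVec s m a b)
    (m' : Fin c → ℕ) :
    blockVec s m' a b ⬝ᵥ adjMat (cliquesJoin s c m') *ᵥ blockVec s m' a b -
        μ * (blockVec s m' a b ⬝ᵥ blockVec s m' a b) =
      ∑ j, ((m' j : ℝ) - m j) * (s * a * b j + m' j * b j ^ 2) := by
  obtain ⟨h0, hk⟩ := adjMat_mulVec_blockVec_eq_smul_iff.1 heig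
  have hdiff : adjMat (cliquesJoin s c m') *ᵥ blockVec s m' a b - μ • blockVec s m' a b =
      blockVec s m' (∑ j, ((m' j : ℝ) - m j) * b j) (fun j ↦ ((m' j : ℝ) - m j) * b j) := by
    rw [adjMat_mulVec_blockVec]
    ext (p | ⟨k, t⟩)
    · simp only [Pi.sub_apply, Pi.smul_apply, blockVec_inl, smul_eq_mul, sub_mul,
        Finset.sum_sub_distrib]
      linear_combination h0 p.pos
    · simp only [Pi.sub_apply, Pi.smul_apply, blockVec_inr, smul_eq_mul]
      linear_combination hk k (hm k)
  rw [← smul_eq_mul μ, ← dotProduct_smul, ← dotProduct_sub, hdiff, blockVec_dotProduct_blockVec]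
  simp only [Finset.mul_sum, ← Finset.sum_add_distrib]
  exact Finset.sum_congr rfl fun j _ ↦ by ring

theorem exists_blockVec_mulVec_eq_lam1_smul_of_pos (hs : 0 < s) (hm : ∀ j, 0 < m j) :
    ∃ a b, 0 < a ∧ (∀ j, 0 < b j) ∧ (∀ j k, m j ≤ m k → b j ≤ b k) ∧
      adjMat (cliquesJoin s c m) *ᵥ blockVec s m a b =
        lam1 (adjMat (cliquesJoin s c m)) • blockVec s m a b := by
  have : Nonempty (Fin s ⊕ (Σ i : Fin c, Fin (m i))) := ⟨.inl ⟨0, hs⟩⟩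
  obtain ⟨a, b, ha, hb, hx, heig⟩ := exists_blockVec_mulVec_eq_lam1_smul (s := s) (m := m)
  obtain ⟨h0, hk⟩ := adjMat_mulVec_blockVec_eq_smul_iff.1 heig
  set μ := lam1 (adjMat (cliquesJoin s c m))
  have ha' : 0 < a := by
    refine ha.lt_of_ne fun ha0 ↦ hx ?_
    have hsum : ∑ j, (m j : ℝ) * b j = 0 := by simpa [← ha0] using h0 hs
    have hb0 (j : Fin c) : b j = 0 := by
      have := (Finset.sum_eq_zero_iff_of_nonneg fun j _ ↦ mul_nonneg (m j).cast_nonneg (hb j)).1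
        hsum j (Finset.mem_univ j)
      simpa [(hm j).ne'] using this
    ext (p | q) <;> simp [← ha0, hb0]
  have hbX (k : Fin c) : b k * (μ + 1 - m k) = s * a := by linear_combination -hk k (hm k)
  have hsa : 0 < (s : ℝ) * a := mul_pos (Nat.cast_pos.2 hs) ha'
  have hpos (k : Fin c) : 0 < b k ∧ 0 < μ + 1 - m k :=
    (pos_and_pos_or_neg_and_neg_of_mul_pos ((hbX k).symm ▸ hsa)).resolve_right
      fun h ↦ (hb k).not_gt h.1
  refine ⟨a, b, ha', fun k ↦ (hpos k).1, fun j k hjk ↦ ?_, heig⟩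
  have hjk' : (m j : ℝ) ≤ m k := Nat.cast_le.2 hjk
  refine le_of_mul_le_mul_right ?_ (hpos k).2
  calc b j * (μ + 1 - m k) ≤ b j * (μ + 1 - m j) := by gcongr; exact hb j
    _ = b k * (μ + 1 - m k) := by rw [hbX, hbX]

theorem sub_one_le_lam1_cliquesJoin (hz : 0 < m z) :
    (m z : ℝ) - 1 ≤ lam1 (adjMat (cliquesJoin s c m)) := by
  have h := (adjMat_isHermitian (cliquesJoin s c m)).dotProduct_mulVec_le_lam1_mul
    (blockVec s m 0 (Pi.single z 1))
  simp [adjMat_mulVec_blockVec, blockVec_dotProduct_blockVec, Pi.single_apply] at h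
  rw [mul_comm] at h
  exact le_of_mul_le_mul_right h (Nat.cast_pos.2 hz)

theorem lam1_cliquesJoin_zero_le (hz : 0 < m z) (hmz : ∀ j, m j ≤ m z) :
    lam1 (adjMat (cliquesJoin 0 c m)) ≤ m z - 1 := by
  have : Nonempty (Fin 0 ⊕ (Σ i : Fin c, Fin (m i))) := ⟨.inr ⟨z, ⟨0, hz⟩⟩⟩
  obtain ⟨a, b, -, -, hx, heig⟩ := exists_blockVec_mulVec_eq_lam1_smul (s := 0) (m := m)
  obtain ⟨(p | ⟨k, t⟩), hw⟩ := Function.ne_iff.1 hx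
  · exact p.elim0
  have hk := (adjMat_mulVec_blockVec_eq_smul_iff.1 heig).2 k t.pos
  have hbk : b k ≠ 0 := by simpa using hw
  have : lam1 (adjMat (cliquesJoin 0 c m)) = m k - 1 :=
    mul_right_cancel₀ hbk (by linear_combination -hk)
  rw [this]
  gcongr
  exact hmz k

theorem lam1_lt_lam1_of_pos (hs : 0 < s) (hm : ∀ j, 0 < m j) (hmz : ∀ j, m j ≤ m z)
    (hm' : ∀ j, j ≠ z → m' j = 1) (hsum : ∑ j, m' j = ∑ j, m j) (hz' : 1 < m' z)
    {i : Fin c} (hiz : i ≠ z) (hi : 1 < m i) :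
    lam1 (adjMat (cliquesJoin s c m)) < lam1 (adjMat (cliquesJoin s c m')) := by
  obtain ⟨a, b, ha, hb, hmono, heig⟩ := exists_blockVec_mulVec_eq_lam1_smul_of_pos hs hm
  refine (adjMat_isHermitian _).lt_lam1_of_mul_lt (x := blockVec s m' a b) ?_
  rw [← sub_pos, dotProduct_mulVec_blockVec_sub_eq hm heig]
  set f : Fin c → ℝ := fun j ↦ s * a * b j + m' j * b j ^ 2
  have hD : ∑ j, ((m' j : ℝ) - m j) = 0 := by
    rw [Finset.sum_sub_distrib, sub_eq_zero]
    exact_mod_cast hsum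
  have hshift : ∑ j, ((m' j : ℝ) - m j) * f j = ∑ j, ((m j : ℝ) - m' j) * (f z - f j) := by
    rw [← sub_zero (∑ j, _), ← zero_mul (f z), ← hD, Finset.sum_mul, ← Finset.sum_sub_distrib]
    exact Finset.sum_congr rfl fun j _ ↦ by ring
  have hgap {j : Fin c} (hj : j ≠ z) : ((m' z : ℝ) - 1) * b z ^ 2 ≤ f z - f j := by
    have hbj := hmono j z (hmz j)
    have hsa : 0 ≤ (s : ℝ) * a := by positivity
    simp only [f, hm' j hj, Nat.cast_one, one_mul]
    nlinarith [mul_le_mul_of_nonneg_left hbj hsa, (hb j).le]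
  have h1z : (1 : ℝ) < m' z := by exact_mod_cast hz'
  have hgap0 : 0 < ((m' z : ℝ) - 1) * b z ^ 2 := mul_pos (by linarith) (pow_pos (hb z) 2)
  rw [hshift]
  refine Finset.sum_pos' (fun j _ ↦ ?_) ⟨i, Finset.mem_univ i, ?_⟩
  · rcases eq_or_ne j z with rfl | hj
    · simp
    · have : (1 : ℝ) ≤ m j := by exact_mod_cast hm j
      rw [hm' j hj, Nat.cast_one]
      exact mul_nonneg (by linarith) (hgap0.le.trans (hgap hj))
  · have : (1 : ℝ) < m i := by exact_mod_cast hi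
    rw [hm' i hiz, Nat.cast_one]
    exact mul_pos (by linarith) (hgap0.trans_le (hgap hiz))

theorem lt_and_exists_one_lt_of_ne (hm : ∀ j, 0 < m j) (hm' : ∀ j, j ≠ z → m' j = 1)
    (hsum : ∑ j, m' j = ∑ j, m j) (hne : m ≠ m') : m z < m' z ∧ ∃ i ≠ z, 1 < m i := by
  have hsplit (f : Fin c → ℕ) : ∑ j, f j = f z + ∑ j ∈ Finset.univ.erase z, f j :=
    (Finset.add_sum_erase _ _ (Finset.mem_univ z)).symm
  have hrest : ∑ j ∈ Finset.univ.erase z, m' j = ∑ j ∈ Finset.univ.erase z, 1 :=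
    Finset.sum_congr rfl fun j hj ↦ hm' j (Finset.ne_of_mem_erase hj)
  have hsm := hsplit m
  have hsm' := hsplit m'
  by_cases h : ∃ i ≠ z, 1 < m i
  · obtain ⟨i, hiz, hi⟩ := h
    have : ∑ j ∈ Finset.univ.erase z, 1 < ∑ j ∈ Finset.univ.erase z, m j :=
      Finset.sum_lt_sum (fun j _ ↦ hm j) ⟨i, Finset.mem_erase.2 ⟨hiz, Finset.mem_univ i⟩, hi⟩
    exact ⟨by omega, i, hiz, hi⟩
  · push Not at h
    have hmi (j : Fin c) (hj : j ≠ z) : m j = m' j := by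
      have := h j hj
      have := hm j
      rw [hm' j hj]
      omega
    have : ∑ j ∈ Finset.univ.erase z, m j = ∑ j ∈ Finset.univ.erase z, m' j :=
      Finset.sum_congr rfl fun j hj ↦ hmi j (Finset.ne_of_mem_erase hj)
    refine absurd (funext fun j ↦ ?_) hne
    rcases eq_or_ne j z with rfl | hj
    · omega
    · exact hmi j hj

theorem lam1_lt_lam1_of_ne (hm : ∀ j, 0 < m j) (hmz : ∀ j, m j ≤ m z)
    (hm' : ∀ j, j ≠ z → m' j = 1) (hsum : ∑ j, m' j = ∑ j, m j) (hne : m ≠ m') :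
    lam1 (adjMat (cliquesJoin s c m)) < lam1 (adjMat (cliquesJoin s c m')) := by
  obtain ⟨hlt, i, hiz, hi⟩ := lt_and_exists_one_lt_of_ne hm hm' hsum hne
  rcases s.eq_zero_or_pos with rfl | hs
  · calc lam1 (adjMat (cliquesJoin 0 c m)) ≤ m z - 1 := lam1_cliquesJoin_zero_le (hm z) hmz
      _ < m' z - 1 := by gcongr
      _ ≤ lam1 (adjMat (cliquesJoin 0 c m')) := sub_one_le_lam1_cliquesJoin ((hm z).trans hlt)
  · exact lam1_lt_lam1_of_pos hs hm hmz hm' hsum (by have := hm z; omega) hiz hi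

end CliquesJoin

theorem stmt5_general (s c n : ℕ) (m : Fin c → ℕ)
    (hpos : ∀ i, 1 ≤ m i) (hmono : Antitone m)
    (hsum : n = (∑ i, m i) + s) :
    lam1 (adjMat (cliquesJoin s c m)) ≤
      lam1 (adjMat (cliquesJoin s c (fun i => if i.val = 0 then n - s - c + 1 else 1))) ∧
    (lam1 (adjMat (cliquesJoin s c m)) =
      lam1 (adjMat (cliquesJoin s c (fun i => if i.val = 0 then n - s - c + 1 else 1)))
      ↔ m = fun i => if i.val = 0 then n - s - c + 1 else 1) := by
  suffices h : m = (fun i => if i.val = 0 then n - s - c + 1 else 1) ∨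
      lam1 (adjMat (cliquesJoin s c m)) <
        lam1 (adjMat (cliquesJoin s c (fun i => if i.val = 0 then n - s - c + 1 else 1))) by
    rcases h with h | h
    · subst h
      exact ⟨le_rfl, iff_of_true rfl rfl⟩
    · exact ⟨h.le, iff_of_false h.ne fun h' ↦ h.ne (by rw [h'])⟩
  rcases c with _ | c
  · exact Or.inl (funext fun i ↦ i.elim0)
  refine or_iff_not_imp_left.2 (lam1_lt_lam1_of_ne (z := 0) hpos (fun j ↦ hmono (Fin.zero_le j))
    (fun j hj ↦ if_neg (Fin.val_ne_zero_iff.2 hj)) ?_)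
  have hcard : ∑ _i : Fin (c + 1), 1 ≤ ∑ i, m i := Finset.sum_le_sum fun i _ ↦ hpos i
  rw [Finset.sum_const, Finset.card_univ, Fintype.card_fin, smul_eq_mul, mul_one] at hcard
  rw [Fin.sum_univ_succ]
  simp
  omega

/-- For n₁ ≥ ⋯ ≥ n_c positive with n = Σ nᵢ + s and n₁ ≤ n − s − c + 1,
λ₁(K_s ∨ (K_{n₁} ∪ ⋯ ∪ K_{n_c})) ≤ λ₁(K_s ∨ (K_{n−s−c+1} ∪ (c−1)K₁)), with equality iff
(n₁,…,n_c) = (n−s−c+1, 1, …, 1). -/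
theorem stmt5 (s c n : ℕ) (hc : 0 < c) (m : Fin c → ℕ)
    (hpos : ∀ i, 1 ≤ m i) (hmono : Antitone m)
    (hsum : n = (∑ i, m i) + s)
    (hmax : m ⟨0, hc⟩ ≤ n - s - c + 1) :
    lam1 (adjMat (cliquesJoin s c m)) ≤
      lam1 (adjMat (cliquesJoin s c (fun i => if i.val = 0 then n - s - c + 1 else 1))) ∧
    (lam1 (adjMat (cliquesJoin s c m)) =
      lam1 (adjMat (cliquesJoin s c (fun i => if i.val = 0 then n - s - c + 1 else 1)))
      ↔ m = fun i => if i.val = 0 then n - s - c + 1 else 1) :=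
  stmt5_general s c n m hpos hmono hsum
end

section
/- Let s, t, n be positive integers with s ≥ 2 and n ≥ ts + s + 1. Then λ₁(K_s ∨ (K_{n−ts−s} ∪ tsK₁)) < η(t,n), where η(t,n) is the largest root of x³ − (n−t−2)x² − (n−1)x + t(n−t−2) = 0. -/
open scoped Classical
open Matrix Polynomial

lemma aux_card_filter_lt (n c : ℕ) :
    ((Finset.univ : Finset (Fin n)).filter (fun i => i.val < c)).card = min c n := by
  rw [Finset.card_filter, Fin.sum_univ_eq_sum_range (fun i => if i < c then 1 else 0)]
  rw [← Finset.card_filter]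
  have : (Finset.range n).filter (fun i => i < c) = Finset.range (min c n) := by
    ext x; simp; omega
  rw [this, Finset.card_range]

lemma aux_eig (s t n : ℕ) (hs : 2 ≤ s) (ht : 1 ≤ t) (hn : t*s + s + 1 ≤ n) (μ : ℝ)
    (v : Fin n → ℝ) (hv : v ≠ 0)
    (heq : (adjMat (splitJoin s (n - t*s - s) n)).mulVec v = μ • v) :
    μ = -1 ∨ μ = 0 ∨
      μ ^ 3 + (2 - s - ((n:ℝ) - t*s - s)) * μ ^ 2
        + (1 - s - ((n:ℝ) - t*s - s) - t*(s:ℝ)^2) * μ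
        - t*(s:ℝ)^2*(1 - ((n:ℝ) - t*s - s)) = 0 := by
  set a : ℕ := n - t*s - s with ha
  have hsa : s + a ≤ n := by omega
  have hsn : s ≤ n := by omega
  have hAcast : ((a:ℝ)) = (n:ℝ) - t*s - s := by
    have h1 : a + (t*s + s) = n := by omega
    have := congrArg (fun k : ℕ => (k : ℝ)) h1
    push_cast at this
    linarith
  set G := splitJoin s a n with hG
  -- row equations
  have hrow : ∀ i : Fin n, ∑ j ∈ Finset.univ.filter (G.Adj i), v j = μ * v i := by
    intro i
    have := congrFun heq i
    simp only [Matrix.mulVec, dotProduct, adjMat, Matrix.of_apply, Pi.smul_apply,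
      smul_eq_mul, ite_mul, one_mul, zero_mul] at this
    rw [Finset.sum_filter]
    exact this
  -- the three classes
  set Qs := Finset.univ.filter (fun i : Fin n => i.val < s) with hQs
  set Qsa := Finset.univ.filter (fun i : Fin n => i.val < s + a) with hQsa
  set W := ∑ i, v i with hW
  set σ := ∑ i ∈ Qs, v i with hσ
  set P := ∑ i ∈ Qsa, v i with hP
  have hQsub : Qs ⊆ Qsa := by
    intro i hi
    simp only [hQs, Finset.mem_filter] at hi
    simp only [hQsa, Finset.mem_filter]
    exact ⟨hi.1, by omega⟩
  have hcardQs : Qs.card = s := by rw [hQs, aux_card_filter_lt]; omega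
  have hcardQsa : Qsa.card = s + a := by rw [hQsa, aux_card_filter_lt]; omega
  -- class row equations
  have hrow1 : ∀ i ∈ Qs, μ * v i = W - v i := by
    intro i hi
    simp only [hQs, Finset.mem_filter] at hi
    have hfil : Finset.univ.filter (G.Adj i) = Finset.univ.erase i := by
      ext j
      simp only [Finset.mem_filter, Finset.mem_erase, Finset.mem_univ, and_true, true_and]
      constructor
      · rintro ⟨h, -⟩; exact h.symm
      · intro h; exact ⟨h.symm, Or.inl hi.2⟩
    rw [← hrow i, hfil, Finset.sum_erase_eq_sub (Finset.mem_univ i)]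
  have hrow2 : ∀ i ∈ Qsa \ Qs, μ * v i = P - v i := by
    intro i hi
    simp only [Finset.mem_sdiff, hQs, hQsa, Finset.mem_filter, Finset.mem_univ, true_and,
      not_lt] at hi
    have hfil : Finset.univ.filter (G.Adj i) = Qsa.erase i := by
      ext j
      simp only [hQsa, Finset.mem_filter, Finset.mem_erase, Finset.mem_univ, and_true, true_and]
      constructor
      · rintro ⟨h, hor⟩
        refine ⟨h.symm, ?_⟩
        rcases hor with h1 | h1 | h1
        · omega
        · omega
        · exact h1.2
      · rintro ⟨h, hj⟩
        exact ⟨h.symm, Or.inr (Or.inr ⟨hi.1, hj⟩)⟩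
    have hiQsa : i ∈ Qsa := by simp only [hQsa, Finset.mem_filter, Finset.mem_univ, true_and]; omega
    rw [← hrow i, hfil, Finset.sum_erase_eq_sub hiQsa]
  have hrow3 : ∀ i ∈ Finset.univ.filter (fun i : Fin n => ¬ i.val < s + a), μ * v i = σ := by
    intro i hi
    simp only [Finset.mem_filter, Finset.mem_univ, true_and, not_lt] at hi
    have hfil : Finset.univ.filter (G.Adj i) = Qs := by
      ext j
      simp only [hQs, Finset.mem_filter, Finset.mem_univ, true_and]
      constructor
      · rintro ⟨h, hor⟩
        rcases hor with h1 | h1 | h1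
        · omega
        · exact h1
        · omega
      · intro hj
        have : i ≠ j := by intro h; subst h; omega
        exact ⟨this, Or.inr (Or.inl hj)⟩
    rw [← hrow i, hfil]
  -- summed equations
  have eqS : μ * σ = s * W - σ := by
    rw [hσ, Finset.mul_sum]
    rw [Finset.sum_congr rfl hrow1]
    rw [Finset.sum_sub_distrib, Finset.sum_const, hcardQs, nsmul_eq_mul]
  have eqB : μ * (P - σ) = a * P - (P - σ) := by
    have h1 : ∑ i ∈ Qsa \ Qs, v i = P - σ := Finset.sum_sdiff_eq_sub hQsub
    have hcards : (Qsa \ Qs).card = a := by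
      rw [Finset.card_sdiff_of_subset hQsub, hcardQs, hcardQsa]; omega
    calc μ * (P - σ) = ∑ i ∈ Qsa \ Qs, μ * v i := by rw [← Finset.mul_sum, h1]
      _ = ∑ i ∈ Qsa \ Qs, (P - v i) := Finset.sum_congr rfl hrow2
      _ = a * P - (P - σ) := by
          rw [Finset.sum_sub_distrib, Finset.sum_const, hcards, nsmul_eq_mul, h1]
  have eqI : μ * (W - P) = (t*s : ℕ) * σ := by
    have h1 : ∑ i ∈ Finset.univ.filter (fun i : Fin n => ¬ i.val < s + a), v i = W - P := by
      have := Finset.sum_filter_add_sum_filter_not Finset.univ (fun i : Fin n => i.val < s + a) v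
      rw [← hQsa] at this
      rw [← hP] at this
      linarith [this]
    have h2 : μ * (W - P) = ∑ i ∈ Finset.univ.filter (fun i : Fin n => ¬ i.val < s + a), μ * v i := by
      rw [← Finset.mul_sum, h1]
    rw [h2, Finset.sum_congr rfl hrow3, Finset.sum_const, nsmul_eq_mul]
    congr 1
    have : (Finset.univ.filter (fun i : Fin n => ¬ i.val < s + a)).card = n - (s+a) := by
      have hh := Finset.card_filter_add_card_filter_not (s := (Finset.univ : Finset (Fin n)))
        (p := fun i : Fin n => i.val < s + a)
      rw [← hQsa] at hh
      rw [hcardQsa] at hh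
      simp only [Finset.card_univ, Fintype.card_fin] at hh
      omega
    rw [this]
    congr 1
    omega
  -- case split on μ
  by_cases hμ1 : μ = -1
  · exact Or.inl hμ1
  by_cases hμ0 : μ = 0
  · exact Or.inr (Or.inl hμ0)
  refine Or.inr (Or.inr ?_)
  have hμ1' : μ + 1 ≠ 0 := fun h => hμ1 (by linarith)
  have hne : ¬ (σ = 0 ∧ P = 0 ∧ W = 0) := by
    rintro ⟨h1, h2, h3⟩
    apply hv
    funext i
    simp only [Pi.zero_apply]
    rcases lt_or_ge i.val s with hi | hi
    · have hmem : i ∈ Qs := by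
        simp only [hQs, Finset.mem_filter, Finset.mem_univ, true_and]; exact hi
      have h := hrow1 i hmem
      rw [h3] at h
      have hz : (μ + 1) * v i = 0 := by linarith
      exact (mul_eq_zero.mp hz).resolve_left hμ1'
    rcases lt_or_ge i.val (s + a) with hi2 | hi2
    · have hmem : i ∈ Qsa \ Qs := by
        simp only [Finset.mem_sdiff, hQsa, hQs, Finset.mem_filter, Finset.mem_univ, true_and]
        omega
      have h := hrow2 i hmem
      rw [h2] at h
      have hz : (μ + 1) * v i = 0 := by linarith
      exact (mul_eq_zero.mp hz).resolve_left hμ1'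
    · have hmem : i ∈ Finset.univ.filter (fun i : Fin n => ¬ i.val < s + a) := by
        simp only [Finset.mem_filter, Finset.mem_univ, true_and]; omega
      have h := hrow3 i hmem
      rw [h1] at h
      exact (mul_eq_zero.mp h).resolve_left hμ0
  -- set up the 3x3 matrix
  have eqI' : μ * (W - P) = (t : ℝ) * s * σ := by
    rw [eqI]; push_cast; ring
  obtain ⟨M, hM⟩ : ∃ M : Matrix (Fin 3) (Fin 3) ℝ,
      M = !![μ+1-(s:ℝ), -(s:ℝ), -(s:ℝ); -(a:ℝ), μ+1-(a:ℝ), 0; -((t:ℝ)*s), 0, μ] := ⟨_, rfl⟩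
  have hw : (![σ, P - σ, W - P] : Fin 3 → ℝ) ≠ 0 := by
    intro h
    apply hne
    have h0 := congrFun h 0
    have h1 := congrFun h 1
    have h2 := congrFun h 2
    simp only [Matrix.cons_val_zero, Matrix.cons_val_one, Matrix.head_cons, Pi.zero_apply,
      Matrix.cons_val_two, Matrix.tail_cons] at h0 h1 h2
    refine ⟨h0, by linarith, by linarith⟩
  have hmv : M.mulVec ![σ, P - σ, W - P] = 0 := by
    funext k
    rw [hM]
    fin_cases k
    all_goals simp [Matrix.mulVec, dotProduct, Fin.sum_univ_three]
    · linear_combination eqS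
    · linear_combination eqB
    · linear_combination eqI'
  have hdet : M.det = 0 := Matrix.exists_mulVec_eq_zero_iff.mp ⟨_, hw, hmv⟩
  rw [hM, Matrix.det_fin_three] at hdet
  simp only [Matrix.cons_val_zero, Matrix.cons_val_one, Matrix.head_cons, Matrix.cons_val_two,
    Matrix.tail_cons, Matrix.cons_val', Matrix.empty_val', Matrix.cons_val_fin_one,
    Matrix.head_fin_const, Matrix.of_apply] at hdet
  rw [← hAcast]
  linear_combination hdet

lemma aux_eta_gt (T N η : ℝ) (ht : 1 ≤ T) (hN : T + 3 ≤ N)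
    (hroot : η ^ 3 - (N - T - 2) * η ^ 2 - (N - 1) * η + T * (N - T - 2) = 0)
    (hmax : ∀ x : ℝ, x ^ 3 - (N - T - 2) * x ^ 2 - (N - 1) * x + T * (N - T - 2) = 0 → x ≤ η) :
    N - T - 1 < η := by
  have hcont : Continuous fun x : ℝ => x ^ 3 - (N - T - 2) * x ^ 2 - (N - 1) * x + T * (N - T - 2) := by
    continuity
  have hab : N - T - 1 ≤ N := by linarith
  have hpa : (fun x : ℝ => x ^ 3 - (N - T - 2) * x ^ 2 - (N - 1) * x + T * (N - T - 2)) (N - T - 1) = -T := by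
    ring
  have hpb : (0:ℝ) < (fun x : ℝ => x ^ 3 - (N - T - 2) * x ^ 2 - (N - 1) * x + T * (N - T - 2)) N := by
    simp only
    nlinarith
  have := intermediate_value_Icc hab hcont.continuousOn
  have h0 : (0:ℝ) ∈ Set.Icc ((fun x : ℝ => x ^ 3 - (N - T - 2) * x ^ 2 - (N - 1) * x + T * (N - T - 2)) (N - T - 1)) ((fun x : ℝ => x ^ 3 - (N - T - 2) * x ^ 2 - (N - 1) * x + T * (N - T - 2)) N) := by
    constructor
    · rw [hpa]; linarith
    · linarith [hpb.le]
  obtain ⟨ξ, hξ, hξ0⟩ := this h0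
  have hξη := hmax ξ hξ0
  have : ξ ≠ N - T - 1 := by
    intro h; rw [h] at hξ0; rw [hpa] at hξ0; linarith
  have := hξ.1
  rcases lt_or_eq_of_le this with h | h
  · linarith
  · exact absurd h.symm ‹ξ ≠ N - T - 1›

lemma aux_p_pos (T N η : ℝ) (ht : 1 ≤ T) (hN : T + 3 ≤ N)
    (hroot : η ^ 3 - (N - T - 2) * η ^ 2 - (N - 1) * η + T * (N - T - 2) = 0)
    (hmax : ∀ x : ℝ, x ^ 3 - (N - T - 2) * x ^ 2 - (N - 1) * x + T * (N - T - 2) = 0 → x ≤ η)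
    (x : ℝ) (hx : η < x) :
    0 < x ^ 3 - (N - T - 2) * x ^ 2 - (N - 1) * x + T * (N - T - 2) := by
  by_contra hp
  push_neg at hp
  have hpn : (0:ℝ) < N ^ 3 - (N - T - 2) * N ^ 2 - (N - 1) * N + T * (N - T - 2) := by nlinarith
  rcases le_or_gt N x with hxn | hxn
  · -- x ≥ N : p x > 0 directly
    nlinarith [sq_nonneg x, mul_pos (mul_pos (show (0:ℝ) < x by linarith) (show (0:ℝ) < x by linarith)) (show (0:ℝ) < T + 1 by linarith)]
  · have hcont : Continuous fun y : ℝ => y ^ 3 - (N - T - 2) * y ^ 2 - (N - 1) * y + T * (N - T - 2) := by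
      continuity
    obtain ⟨ξ, hξ, hξ0⟩ := intermediate_value_Icc hxn.le hcont.continuousOn
      (Set.mem_Icc.mpr ⟨hp, hpn.le⟩)
    have := hmax ξ hξ0
    linarith [hξ.1]

lemma aux_root3_lt (S T N η μ : ℝ) (hs : 2 ≤ S) (ht : 1 ≤ T) (hn : T*S + S + 1 ≤ N)
    (hη1 : N - T - 1 < η)
    (hη2 : ∀ x : ℝ, η < x → 0 < x ^ 3 - (N - T - 2) * x ^ 2 - (N - 1) * x + T * (N - T - 2))
    (hroot : η ^ 3 - (N - T - 2) * η ^ 2 - (N - 1) * η + T * (N - T - 2) = 0)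
    (hf : μ ^ 3 + (2 - S - (N - T*S - S)) * μ ^ 2 + (1 - S - (N - T*S - S) - T*S^2) * μ
      - T*S^2*(1 - (N - T*S - S)) = 0) :
    μ < η := by
  by_contra hμ
  push_neg at hμ
  -- h(μ) > 0
  have hm : N - T - 1 < μ := lt_of_lt_of_le hη1 hμ
  have hh : 0 < μ^2 - S*μ + (1+S)*N - (1+T)*S^2 - (T+2)*S - (T+2) := by
    nlinarith [mul_nonneg (show (0:ℝ) ≤ μ - (N-T-1) by linarith)
      (show (0:ℝ) ≤ μ + (N-T-1) - S by nlinarith), sq_nonneg (S-2), sq_nonneg (T-1),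
      mul_nonneg (mul_nonneg (show (0:ℝ) ≤ T-1 by linarith) (show (0:ℝ) ≤ S-2 by linarith)) (show (0:ℝ) ≤ N - T*S - S - 1 by linarith)]
  -- p(μ) = T(1-S) h(μ) < 0
  have hp : μ ^ 3 - (N - T - 2) * μ ^ 2 - (N - 1) * μ + T * (N - T - 2)
      = T * (1 - S) * (μ^2 - S*μ + (1+S)*N - (1+T)*S^2 - (T+2)*S - (T+2)) := by
    linear_combination hf
  have hpneg : μ ^ 3 - (N - T - 2) * μ ^ 2 - (N - 1) * μ + T * (N - T - 2) < 0 := by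
    rw [hp]
    have : T * (1 - S) < 0 := by nlinarith
    exact mul_neg_of_neg_of_pos this hh
  rcases eq_or_lt_of_le hμ with h | h
  · rw [h] at hroot; linarith
  · linarith [hη2 μ h]


/-- For s ≥ 2, λ₁(K_s ∨ (K_{n−ts−s} ∪ tsK₁)) < η(t,n), the largest root of
x³ − (n−t−2)x² − (n−1)x + t(n−t−2) = 0. -/
theorem stmt16 (s t n : ℕ) (hs : 2 ≤ s) (ht : 1 ≤ t) (hn : t * s + s + 1 ≤ n)
    (η : ℝ)
    (hroot : η ^ 3 - ((n : ℝ) - t - 2) * η ^ 2 - ((n : ℝ) - 1) * η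
      + (t : ℝ) * ((n : ℝ) - t - 2) = 0)
    (hmax : ∀ x : ℝ, x ^ 3 - ((n : ℝ) - t - 2) * x ^ 2 - ((n : ℝ) - 1) * x
      + (t : ℝ) * ((n : ℝ) - t - 2) = 0 → x ≤ η) :
    lam1 (adjMat (splitJoin s (n - t * s - s) n)) < η := by
  have hT : (1:ℝ) ≤ (t:ℝ) := by exact_mod_cast ht
  have hS : (2:ℝ) ≤ (s:ℝ) := by exact_mod_cast hs
  have hN : (t:ℝ)*(s:ℝ) + (s:ℝ) + 1 ≤ (n:ℝ) := by exact_mod_cast hn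
  have hN3 : (t:ℝ) + 3 ≤ (n:ℝ) := by nlinarith
  have hη1 : (n:ℝ) - t - 1 < η := aux_eta_gt (t:ℝ) (n:ℝ) η hT hN3 hroot hmax
  have hη2 : ∀ x : ℝ, η < x →
      0 < x ^ 3 - ((n:ℝ) - t - 2) * x ^ 2 - ((n:ℝ) - 1) * x + t * ((n:ℝ) - t - 2) :=
    fun x hx => aux_p_pos (t:ℝ) (n:ℝ) η hT hN3 hroot hmax x hx
  set E := {μ : ℝ | ∃ v : Fin n → ℝ, v ≠ 0 ∧
    (adjMat (splitJoin s (n - t*s - s) n)).mulVec v = μ • v} with hE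
  have hlt : ∀ μ ∈ E, μ < η := by
    rintro μ ⟨v, hv, hveq⟩
    rcases aux_eig s t n hs ht hn μ v hv hveq with h | h | h
    · subst h; nlinarith
    · subst h; nlinarith
    · exact aux_root3_lt (s:ℝ) (t:ℝ) (n:ℝ) η μ hS hT hN hη1 hη2 hroot h
  have hfin : E.Finite := by
    have hply : (Cubic.mk (1:ℝ) (2 - s - ((n:ℝ) - t*s - s))
        (1 - s - ((n:ℝ) - t*s - s) - t*(s:ℝ)^2)
        (- (t*(s:ℝ)^2*(1 - ((n:ℝ) - t*s - s))))).toPoly ≠ 0 :=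
      Cubic.ne_zero_of_a_ne_zero one_ne_zero
    have hrfin : ({x : ℝ | x ^ 3 + (2 - s - ((n:ℝ) - t*s - s)) * x ^ 2
        + (1 - s - ((n:ℝ) - t*s - s) - t*(s:ℝ)^2) * x
        - t*(s:ℝ)^2*(1 - ((n:ℝ) - t*s - s)) = 0}).Finite := by
      apply Set.Finite.subset (Polynomial.finite_setOf_isRoot hply)
      intro x hx
      simp only [Set.mem_setOf_eq] at hx ⊢
      show Polynomial.IsRoot _ x
      simp only [Polynomial.IsRoot, Cubic.toPoly, Polynomial.eval_add, Polynomial.eval_mul,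
        Polynomial.eval_pow, Polynomial.eval_C, Polynomial.eval_X]
      linear_combination hx
    apply Set.Finite.subset (((hrfin.insert 0).insert (-1)))
    rintro μ ⟨v, hv, hveq⟩
    rcases aux_eig s t n hs ht hn μ v hv hveq with h | h | h
    · exact Set.mem_insert_iff.mpr (Or.inl h)
    · exact Set.mem_insert_iff.mpr (Or.inr (Set.mem_insert_iff.mpr (Or.inl h)))
    · exact Set.mem_insert_iff.mpr (Or.inr (Set.mem_insert_iff.mpr (Or.inr h)))
  show sSup E < η
  rcases E.eq_empty_or_nonempty with h | h
  · rw [h, Real.sSup_empty]; nlinarith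
  · exact hlt _ (h.csSup_mem hfin)
end
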